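/- arXiv:1904.01819 — 3 statements merged into one kernel-verified Lean document; each statement's English description precedes it below -/
import Mathlib

section
/- Let A be a finite alphabet, n ≥ 1, P_A a probability distribution on A with P_A(a) > 0 for all a, and C ⊆ A^n a nonempty finite codebook. Then (1/n) · D(Uniform_C ‖ P_A^n) ≥ D(P_C ‖ P_A), where Uniform_C is the uniform distribution on C. -/
open Finset

/-- The empirical symbol distribution of a codebook `C ⊆ A^n`:
`P_C(a) = (∑_{c ∈ C} n_a(c)) / (n * |C|)`. -/
noncomputable def empDist {A : Type*} [DecidableEq A] {n : ℕ}
    (C : Finset (Fin n → A)) (a : A) : ℝ :=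
  (∑ c ∈ C, ((Finset.univ.filter (fun i => c i = a)).card : ℝ)) / (n * C.card)

set_option maxHeartbeats 1000000 in
/-- `(1/n) D(Uniform_C ‖ P_A^n) ≥ D(P_C ‖ P_A)`. -/
theorem normalized_div_ge_empirical_div {A : Type*} [Fintype A] [DecidableEq A]
    (n : ℕ) (hn : 1 ≤ n)
    (P : A → ℝ) (hP : ∀ a, 0 < P a) (hPsum : ∑ a, P a = 1)
    (C : Finset (Fin n → A)) (hC : C.Nonempty) :
    ∑ a, empDist C a * Real.log (empDist C a / P a)
      ≤ (1 / (n : ℝ)) * ∑ c ∈ C, (1 / (C.card : ℝ)) *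
          Real.log ((1 / (C.card : ℝ)) / ∏ i, P (c i)) := by
  classical
  set e := empDist C with he
  have hkpos : 0 < (C.card : ℝ) := by exact_mod_cast Finset.card_pos.mpr hC
  have hnpos : 0 < (n : ℝ) := by exact_mod_cast hn
  have hNpos : 0 < (n : ℝ) * C.card := mul_pos hnpos hkpos
  set S : A → ℝ := fun a => ∑ c ∈ C, ((univ.filter (fun i => c i = a)).card : ℝ) with hS
  have heS : ∀ a, e a = S a / ((n : ℝ) * C.card) := fun a => rfl
  have hSnn : ∀ a, 0 ≤ S a := fun a => Finset.sum_nonneg (fun c _ => by positivity)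
  have henn : ∀ a, 0 ≤ e a := fun a => div_nonneg (hSnn a) hNpos.le
  -- counting lemma
  have count : ∀ f : A → ℝ, ∑ c ∈ C, ∑ i, f (c i) = ∑ a, S a * f a := by
    intro f
    have h1 : ∀ c : Fin n → A, ∑ i, f (c i)
        = ∑ a, ((univ.filter (fun i => c i = a)).card : ℝ) * f a := by
      intro c
      rw [← Finset.sum_fiberwise univ (fun i => c i) (fun i => f (c i))]
      refine Finset.sum_congr rfl fun a _ => ?_
      have h2 : ∑ i ∈ univ.filter (fun i => c i = a), f (c i)
          = ∑ _i ∈ univ.filter (fun i => c i = a), f a :=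
        Finset.sum_congr rfl (fun i hi => by rw [(Finset.mem_filter.mp hi).2])
      rw [h2, Finset.sum_const, nsmul_eq_mul]
    calc ∑ c ∈ C, ∑ i, f (c i)
        = ∑ c ∈ C, ∑ a, ((univ.filter (fun i => c i = a)).card : ℝ) * f a :=
          Finset.sum_congr rfl (fun c _ => h1 c)
      _ = ∑ a, ∑ c ∈ C, ((univ.filter (fun i => c i = a)).card : ℝ) * f a :=
          Finset.sum_comm
      _ = ∑ a, S a * f a := by
          refine Finset.sum_congr rfl fun a _ => ?_
          rw [hS, ← Finset.sum_mul]
  have hSsum : ∑ a, S a = (n : ℝ) * C.card := by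
    have h := (count (fun _ => 1)).symm
    simpa [mul_comm] using h
  have hesum : ∑ a, e a = 1 := by
    have h : (∑ a, e a) = (∑ a, S a) / ((n : ℝ) * C.card) := by
      simp only [heS]
      rw [← Finset.sum_div]
    rw [h, hSsum, div_self hNpos.ne']
  have hepos : ∀ c ∈ C, ∀ i, 0 < e (c i) := by
    intro c hc i
    have h1 : (1 : ℝ) ≤ ((univ.filter (fun j => c j = c i)).card : ℝ) := by
      have hmem : i ∈ univ.filter (fun j => c j = c i) := by simp
      have hpos : 0 < (univ.filter (fun j => c j = c i)).card :=
        Finset.card_pos.mpr ⟨i, hmem⟩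
      exact_mod_cast hpos
    have h2 : (1 : ℝ) ≤ S (c i) :=
      le_trans h1 (Finset.single_le_sum
        (f := fun c' => ((univ.filter (fun j => c' j = c i)).card : ℝ))
        (fun c' _ => by positivity) hc)
    exact div_pos (lt_of_lt_of_le one_pos h2) hNpos
  set Q : (Fin n → A) → ℝ := fun c => ∏ i, e (c i) with hQ
  have hQpos : ∀ c ∈ C, 0 < Q c := fun c hc => Finset.prod_pos (fun i _ => hepos c hc i)
  have hQsub : ∑ c ∈ C, Q c ≤ 1 := by
    have h1 : ∑ c ∈ C, Q c ≤ ∑ c : Fin n → A, Q c :=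
      Finset.sum_le_sum_of_subset_of_nonneg (Finset.subset_univ C)
        (fun c _ _ => Finset.prod_nonneg (fun i _ => henn (c i)))
    have h2 : (∑ c : Fin n → A, Q c) = ∏ _i : Fin n, ∑ a, e a := by
      rw [Finset.prod_univ_sum]
      simp [hQ]
    have h3 : (∏ _i : Fin n, ∑ a, e a) = 1 := by
      rw [hesum, Finset.prod_const_one]
    calc ∑ c ∈ C, Q c ≤ ∑ c : Fin n → A, Q c := h1
      _ = 1 := by rw [h2, h3]
  -- Gibbs inequality
  have hGibbs : 0 ≤ ∑ c ∈ C, (1 / (C.card : ℝ)) * Real.log ((1 / (C.card : ℝ)) / Q c) := by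
    have key : ∀ c ∈ C, (1 : ℝ) / C.card - Q c
        ≤ (1 / (C.card : ℝ)) * Real.log ((1 / (C.card : ℝ)) / Q c) := by
      intro c hc
      have hq := hQpos c hc
      have hlog : Real.log (Q c * C.card) ≤ Q c * C.card - 1 :=
        Real.log_le_sub_one_of_pos (mul_pos hq hkpos)
      have hrw : Real.log ((1 / (C.card : ℝ)) / Q c) = - Real.log (Q c * C.card) := by
        rw [← Real.log_inv]
        congr 1
        field_simp
      rw [hrw]
      have h4 : (1 / (C.card : ℝ)) * (-(Q c * C.card - 1))
          ≤ (1 / (C.card : ℝ)) * (- Real.log (Q c * C.card)) :=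
        mul_le_mul_of_nonneg_left (neg_le_neg hlog) (by positivity)
      have h5 : (1 / (C.card : ℝ)) * (-(Q c * C.card - 1)) = (1 : ℝ) / C.card - Q c := by
        field_simp
        ring
      linarith
    have hsum : (0 : ℝ) ≤ ∑ c ∈ C, ((1 : ℝ) / C.card - Q c) := by
      rw [Finset.sum_sub_distrib, Finset.sum_const, nsmul_eq_mul]
      have h6 : (C.card : ℝ) * (1 / C.card) = 1 := by field_simp
      rw [h6]
      linarith
    exact le_trans hsum (Finset.sum_le_sum key)
  -- per-codeword log decomposition
  have perc : ∀ c ∈ C, Real.log ((1 / (C.card : ℝ)) / ∏ i, P (c i))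
      = Real.log ((1 / (C.card : ℝ)) / Q c)
        + ∑ i, (Real.log (e (c i)) - Real.log (P (c i))) := by
    intro c hc
    have hPp : 0 < ∏ i, P (c i) := Finset.prod_pos (fun i _ => hP (c i))
    have hQp := hQpos c hc
    have hinvk : (0 : ℝ) < 1 / (C.card : ℝ) := by positivity
    rw [Real.log_div hinvk.ne' hPp.ne', Real.log_div hinvk.ne' hQp.ne',
        Real.log_prod (fun i _ => (hP (c i)).ne'),
        show Q c = ∏ i, e (c i) from rfl,
        Real.log_prod (fun i _ => (hepos c hc i).ne'),
        Finset.sum_sub_distrib]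
    ring
  -- split the RHS sum
  have hRHSsplit : ∑ c ∈ C, (1 / (C.card : ℝ)) * Real.log ((1 / (C.card : ℝ)) / ∏ i, P (c i))
      = (∑ c ∈ C, (1 / (C.card : ℝ)) * Real.log ((1 / (C.card : ℝ)) / Q c))
        + (1 / (C.card : ℝ)) * ∑ a, S a * (Real.log (e a) - Real.log (P a)) := by
    rw [← count (fun a => Real.log (e a) - Real.log (P a)), Finset.mul_sum, ← Finset.sum_add_distrib]
    refine Finset.sum_congr rfl fun c hc => ?_
    rw [perc c hc]
    ring
  have hLHS : ∑ a, e a * Real.log (e a / P a)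
      = ∑ a, e a * (Real.log (e a) - Real.log (P a)) := by
    refine Finset.sum_congr rfl fun a _ => ?_
    rcases eq_or_lt_of_le (henn a) with h | h
    · simp [← h]
    · rw [Real.log_div h.ne' (hP a).ne']
  have h2 : ∑ a, e a * (Real.log (e a) - Real.log (P a))
      = (1 / (n : ℝ)) * ((1 / (C.card : ℝ)) * ∑ a, S a * (Real.log (e a) - Real.log (P a))) := by
    rw [Finset.mul_sum, Finset.mul_sum]
    refine Finset.sum_congr rfl fun a _ => ?_
    rw [heS a]
    field_simp
  rw [hLHS, hRHSsplit, mul_add, h2]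
  have h3 : 0 ≤ (1 / (n : ℝ)) * ∑ c ∈ C, (1 / (C.card : ℝ)) * Real.log ((1 / (C.card : ℝ)) / Q c) :=
    mul_nonneg (by positivity) hGibbs
  linarith
end

section
/- Let 1 ≤ m ≤ n and let C̃ = {c ∈ {0,1}^n : c has exactly m−1 or exactly m ones} be the [m−1,m]-out-of-n codebook. Then for every binary string s with l(s) < n, n_1(s) ≤ m, and N(s) > 0, the branching probability satisfies N(s1)/N(s) = (m − n_1(s)) / (n − l(s) + 1), where s1 denotes s with the bit 1 appended. -/
open Finset

/-- `N C s`: the number of codewords in the base codebook `C ⊆ {0,1}^n`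
whose first `l(s)` bits agree with the binary string `s`. -/
def prefixCount {n : ℕ} (C : Finset (Fin n → Bool)) (s : List Bool) : ℕ :=
  (C.filter (fun c => ∀ i : Fin n, (i : ℕ) < s.length → c i = s.getD (i : ℕ) false)).card

/-- The Hamming weight (number of ones) of a binary codeword. -/
def weight {n : ℕ} (c : Fin n → Bool) : ℕ :=
  (Finset.univ.filter (fun i => c i = true)).card

lemma count_getD (s : List Bool) :
    ((Finset.range s.length).filter (fun i => s.getD i false = true)).card = s.count true := by
  induction s using List.reverseRecOn with
  | nil => simp
  | append_singleton s a ih =>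
    rw [List.length_append, List.length_singleton, Finset.range_add_one, Finset.filter_insert]
    have h2 : (s ++ [a]).getD s.length false = a := by
      rw [List.getD_append_right _ _ _ _ le_rfl]
      simp [List.getD]
    have hfe : (Finset.range s.length).filter (fun i => (s ++ [a]).getD i false = true)
        = (Finset.range s.length).filter (fun i => s.getD i false = true) := by
      apply Finset.filter_congr
      intro i hi
      rw [List.getD_append _ _ _ _ (Finset.mem_range.mp hi)]
    rw [hfe, h2, List.count_append]
    by_cases ha : a = true
    · rw [if_pos ha, Finset.card_insert_of_notMem (by simp), ih, ha]
      simp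
    · rw [if_neg ha, ih]
      simp [ha]

lemma card_fin_lt (n l : ℕ) (hl : l ≤ n) (p : ℕ → Prop) [DecidablePred p] :
    (Finset.univ.filter (fun i : Fin n => (i : ℕ) < l ∧ p (i : ℕ))).card
      = ((Finset.range l).filter p).card := by
  refine Finset.card_bij (fun i _ => (i : ℕ)) ?_ ?_ ?_
  · intro i hi
    simp only [Finset.mem_filter, Finset.mem_univ, true_and] at hi
    simp [Finset.mem_filter, Finset.mem_range, hi.1, hi.2]
  · intro i _ j _ h
    exact Fin.val_injective h
  · intro j hj
    simp only [Finset.mem_filter, Finset.mem_range] at hj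
    exact ⟨⟨j, lt_of_lt_of_le hj.1 hl⟩, by simp [hj.1, hj.2], rfl⟩

lemma weight_split {n : ℕ} (c : Fin n → Bool) (l : ℕ) :
    weight c = (Finset.univ.filter (fun i : Fin n => (i : ℕ) < l ∧ c i = true)).card
      + (Finset.univ.filter (fun i : Fin n => l ≤ (i : ℕ) ∧ c i = true)).card := by
  rw [weight, ← Finset.card_union_of_disjoint]
  · congr 1
    ext i
    simp only [Finset.mem_filter, Finset.mem_univ, true_and, Finset.mem_union]
    constructor
    · intro h
      rcases lt_or_ge (i : ℕ) l with h' | h'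
      · exact Or.inl ⟨h', h⟩
      · exact Or.inr ⟨h', h⟩
    · rintro (⟨_, h⟩ | ⟨_, h⟩) <;> exact h
  · rw [Finset.disjoint_left]
    intro i hi hi'
    simp only [Finset.mem_filter] at hi hi'
    omega

lemma prefix_ones {n : ℕ} (s : List Bool) (hl : s.length ≤ n) (c : Fin n → Bool)
    (hc : ∀ i : Fin n, (i : ℕ) < s.length → c i = s.getD (i : ℕ) false) :
    (Finset.univ.filter (fun i : Fin n => (i : ℕ) < s.length ∧ c i = true)).card
      = s.count true := by
  have heq : (Finset.univ.filter (fun i : Fin n => (i : ℕ) < s.length ∧ c i = true))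
      = (Finset.univ.filter
          (fun i : Fin n => (i : ℕ) < s.length ∧ s.getD (i : ℕ) false = true)) := by
    apply Finset.filter_congr
    intro i _
    constructor
    · rintro ⟨h1, h2⟩; exact ⟨h1, by rw [← hc i h1]; exact h2⟩
    · rintro ⟨h1, h2⟩; exact ⟨h1, by rw [hc i h1]; exact h2⟩
  rw [heq, card_fin_lt n s.length hl (fun i => s.getD i false = true), count_getD]

lemma card_fin_ge (n l : ℕ) (hl : l ≤ n) :
    (Finset.univ.filter (fun i : Fin n => l ≤ (i : ℕ))).card = n - l := by
  have h1 := card_fin_lt n l hl (fun _ => True)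
  simp at h1
  have h2 := Finset.card_filter_add_card_filter_not
    (s := (Finset.univ : Finset (Fin n))) (p := fun i : Fin n => (i : ℕ) < l)
  simp only [not_lt, Finset.card_univ, Fintype.card_fin] at h2
  omega

lemma count_weight_prefix (n : ℕ) (s : List Bool) (h : s.length ≤ n) (t : ℕ) :
    (Finset.univ.filter (fun c : Fin n → Bool => weight c = t ∧
        ∀ i : Fin n, (i : ℕ) < s.length → c i = s.getD (i : ℕ) false)).card
      = if s.count true ≤ t then (n - s.length).choose (t - s.count true) else 0 := by
  by_cases hkt : s.count true ≤ t
  · rw [if_pos hkt]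
    have hS : (Finset.univ.filter (fun i : Fin n => s.length ≤ (i : ℕ))).card = n - s.length :=
      card_fin_ge n s.length h
    rw [← hS, ← Finset.card_powersetCard]
    refine Finset.card_bij
      (fun c _ => Finset.univ.filter (fun i : Fin n => s.length ≤ (i : ℕ) ∧ c i = true))
      ?_ ?_ ?_
    · intro c hc
      simp only [Finset.mem_filter, Finset.mem_univ, true_and] at hc
      obtain ⟨hwt, hpre⟩ := hc
      rw [Finset.mem_powersetCard]
      refine ⟨?_, ?_⟩
      · intro i hi
        simp only [Finset.mem_filter, Finset.mem_univ, true_and] at hi ⊢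
        exact hi.1
      · have hws := weight_split c s.length
        rw [prefix_ones s h c hpre] at hws
        omega
    · intro c1 h1 c2 h2 heq
      simp only [Finset.mem_filter, Finset.mem_univ, true_and] at h1 h2
      funext i
      by_cases hi : (i : ℕ) < s.length
      · rw [h1.2 i hi, h2.2 i hi]
      · have hle : s.length ≤ (i : ℕ) := not_lt.mp hi
        have hmem : (s.length ≤ (i : ℕ) ∧ c1 i = true) ↔ (s.length ≤ (i : ℕ) ∧ c2 i = true) := by
          have := Finset.ext_iff.mp heq i
          simpa only [Finset.mem_filter, Finset.mem_univ, true_and] using this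
        cases hb1 : c1 i <;> cases hb2 : c2 i <;> simp_all
    · intro T hT
      rw [Finset.mem_powersetCard] at hT
      obtain ⟨hTsub, hTcard⟩ := hT
      set c : Fin n → Bool :=
        fun i => if (i : ℕ) < s.length then s.getD (i : ℕ) false else decide (i ∈ T) with hcdef
      have hpre : ∀ i : Fin n, (i : ℕ) < s.length → c i = s.getD (i : ℕ) false :=
        fun i hi => if_pos hi
      have himg : Finset.univ.filter (fun i : Fin n => s.length ≤ (i : ℕ) ∧ c i = true) = T := by
        ext i
        simp only [Finset.mem_filter, Finset.mem_univ, true_and]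
        constructor
        · rintro ⟨hle, hci⟩
          have hci' : c i = decide (i ∈ T) := if_neg (not_lt.mpr hle)
          rw [hci'] at hci
          exact of_decide_eq_true hci
        · intro hiT
          have hle : s.length ≤ (i : ℕ) := by
            have := hTsub hiT
            simpa only [Finset.mem_filter, Finset.mem_univ, true_and] using this
          have hcv : c i = decide (i ∈ T) := if_neg (not_lt.mpr hle)
          refine ⟨hle, ?_⟩
          rw [hcv]
          exact decide_eq_true hiT
      refine ⟨c, ?_, himg⟩
      simp only [Finset.mem_filter, Finset.mem_univ, true_and]
      refine ⟨?_, hpre⟩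
      have hws := weight_split c s.length
      rw [prefix_ones s h c hpre, himg, hTcard] at hws
      omega
  · rw [if_neg hkt]
    rw [Finset.card_eq_zero, Finset.filter_eq_empty_iff]
    intro c _
    rintro ⟨hwt, hpre⟩
    have hws := weight_split c s.length
    rw [prefix_ones s h c hpre] at hws
    omega

lemma prefixCount_two (n m : ℕ) (hm1 : 1 ≤ m) (s : List Bool) (hl : s.length ≤ n) :
    prefixCount
        (Finset.univ.filter (fun c : Fin n → Bool => weight c = m - 1 ∨ weight c = m)) s
      = (if s.count true ≤ m - 1 then (n - s.length).choose (m - 1 - s.count true) else 0)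
        + (if s.count true ≤ m then (n - s.length).choose (m - s.count true) else 0) := by
  unfold prefixCount
  rw [Finset.filter_filter]
  have hun : Finset.univ.filter (fun c : Fin n → Bool => (weight c = m - 1 ∨ weight c = m) ∧
        ∀ i : Fin n, (i : ℕ) < s.length → c i = s.getD (i : ℕ) false)
      = Finset.univ.filter (fun c : Fin n → Bool => weight c = m - 1 ∧
          ∀ i : Fin n, (i : ℕ) < s.length → c i = s.getD (i : ℕ) false)
        ∪ Finset.univ.filter (fun c : Fin n → Bool => weight c = m ∧
          ∀ i : Fin n, (i : ℕ) < s.length → c i = s.getD (i : ℕ) false) := by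
    ext c
    simp only [Finset.mem_filter, Finset.mem_univ, true_and, Finset.mem_union]
    tauto
  rw [hun, Finset.card_union_of_disjoint, count_weight_prefix n s hl (m - 1),
    count_weight_prefix n s hl m]
  rw [Finset.disjoint_left]
  intro c hc hc'
  simp only [Finset.mem_filter, Finset.mem_univ, true_and] at hc hc'
  omega

/-- For the `[m−1,m]`-out-of-`n` codebook (codewords with exactly `m−1` or exactly `m`
ones), the branching probability of the bit `1` after a prefix `s` (with `l(s) < n`,
`n_1(s) ≤ m` and `N(s) > 0`) is `N(s1)/N(s) = (m − n_1(s))/(n − l(s) + 1)`. -/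
theorem branching_prob_two_compositions (n m : ℕ) (hm1 : 1 ≤ m) (hm : m ≤ n)
    (s : List Bool) (hs : s.length < n) (hw : s.count true ≤ m)
    (hN : 0 < prefixCount
        (Finset.univ.filter (fun c : Fin n → Bool => weight c = m - 1 ∨ weight c = m)) s) :
    (prefixCount
        (Finset.univ.filter (fun c : Fin n → Bool => weight c = m - 1 ∨ weight c = m))
        (s ++ [true]) : ℝ) /
      (prefixCount
        (Finset.univ.filter (fun c : Fin n → Bool => weight c = m - 1 ∨ weight c = m))
        s : ℝ)
      = ((m : ℝ) - s.count true) / ((n : ℝ) - s.length + 1) := by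
  set l := s.length with hldef
  set k := s.count true with hkdef
  have hl : l ≤ n := hs.le
  have hNs := prefixCount_two n m hm1 s hl
  have hNs1 := prefixCount_two n m hm1 (s ++ [true]) (by simp [← hldef]; omega)
  have hlen1 : (s ++ [true]).length = l + 1 := by simp [← hldef]
  have hcnt1 : (s ++ [true]).count true = k + 1 := by simp [List.count_append, ← hkdef]
  rw [hlen1, hcnt1] at hNs1
  by_cases hkm : k = m
  · have hz : prefixCount
        (Finset.univ.filter (fun c : Fin n → Bool => weight c = m - 1 ∨ weight c = m))
        (s ++ [true]) = 0 := by
      rw [hNs1, if_neg (by omega), if_neg (by omega)]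
    rw [hz, hkm]
    simp
  · have hklt : k < m := lt_of_le_of_ne hw hkm
    have hr1 : 1 ≤ n - l := by omega
    -- value of N(s)
    have hNsval : prefixCount
        (Finset.univ.filter (fun c : Fin n → Bool => weight c = m - 1 ∨ weight c = m)) s
        = (n - l + 1).choose (m - k) := by
      rw [hNs, if_pos (by omega : k ≤ m - 1), if_pos hw]
      obtain ⟨j, hj⟩ : ∃ j, m - k = j + 1 := ⟨m - k - 1, by omega⟩
      have e1 : m - 1 - k = j := by omega
      rw [e1, hj, Nat.choose_succ_succ]
    -- value of N(s1)
    have hNs1val : prefixCount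
        (Finset.univ.filter (fun c : Fin n → Bool => weight c = m - 1 ∨ weight c = m))
        (s ++ [true]) = (n - l).choose (m - k - 1) := by
      rw [hNs1]
      by_cases hj2 : k + 1 ≤ m - 1
      · rw [if_pos hj2, if_pos (by omega)]
        obtain ⟨j, hj⟩ : ∃ j, m - k - 1 = j + 1 := ⟨m - k - 2, by omega⟩
        have e1 : m - 1 - (k + 1) = j := by omega
        have e2 : m - (k + 1) = j + 1 := by omega
        obtain ⟨r, hr⟩ : ∃ r, n - l = r + 1 := ⟨n - l - 1, by omega⟩
        have e3 : n - (l + 1) = r := by omega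
        rw [e1, e2, e3, hj, hr, Nat.choose_succ_succ]
      · have hj1 : m - k = 1 := by omega
        rw [if_neg hj2, if_pos (by omega), hj1]
        have e2 : m - (k + 1) = 0 := by omega
        rw [e2]
        simp
    rw [hNsval, hNs1val]
    have hNpos : 0 < (n - l + 1).choose (m - k) := by rwa [hNsval] at hN
    have hkey : (n - l + 1) * (n - l).choose (m - k - 1) = (n - l + 1).choose (m - k) * (m - k) := by
      obtain ⟨j, hj⟩ : ∃ j, m - k = j + 1 := ⟨m - k - 1, by omega⟩
      rw [hj]
      simpa using Nat.add_one_mul_choose_eq (n - l) j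
    have hc1 : ((m : ℝ) - k) = ((m - k : ℕ) : ℝ) := by
      rw [Nat.cast_sub hw]
    have hc2 : ((n : ℝ) - l + 1) = ((n - l + 1 : ℕ) : ℝ) := by
      push_cast [Nat.cast_sub hl]
      ring
    rw [hc1, hc2, div_eq_div_iff (by exact_mod_cast hNpos.ne') (by positivity)]
    have := hkey
    have hcast : ((n - l + 1 : ℕ) : ℝ) * ((n - l).choose (m - k - 1) : ℝ)
        = ((n - l + 1).choose (m - k) : ℝ) * ((m - k : ℕ) : ℝ) := by
      exact_mod_cast congrArg (fun x : ℕ => (x : ℝ)) hkey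
    linarith [hcast]
end

section
/- Let n ≥ 1 and let P_A be a probability distribution on {0,1} with P_A(0) > P_A(1) > 0. Then there exists an integer m with 0 ≤ m ≤ n such that the [0,m]-out-of-n codebook C_m = {c ∈ {0,1}^n : c has at most m ones} minimizes D(Uniform_C ‖ P_A^n) over all nonempty codebooks C ⊆ {0,1}^n; i.e., for every nonempty C ⊆ {0,1}^n, D(Uniform_{C_m} ‖ P_A^n) ≤ D(Uniform_C ‖ P_A^n). -/
open Finset

/-- `D(Uniform_C ‖ P^n) = ∑_{c ∈ C} (1/|C|) log((1/|C|)/∏_i P(c_i))` for a binary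
codebook `C ⊆ {0,1}^n` and a distribution `P` on `{0,1}`. -/
noncomputable def divUnif {n : ℕ} (P : Bool → ℝ) (C : Finset (Fin n → Bool)) : ℝ :=
  ∑ c ∈ C, (1 / (C.card : ℝ)) * Real.log ((1 / (C.card : ℝ)) / ∏ i, P (c i))

namespace OptAux

/-- log-likelihood of a codeword -/
noncomputable def L {n : ℕ} (P : Bool → ℝ) (c : Fin n → Bool) : ℝ :=
  ∑ i, Real.log (P (c i))

/-- log-likelihood as a function of the weight -/
noncomputable def Lw (P : Bool → ℝ) (n w : ℕ) : ℝ :=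
  n * Real.log (P false) + w * (Real.log (P true) - Real.log (P false))

lemma weight_le_n {n : ℕ} (c : Fin n → Bool) : weight c ≤ n := by
  classical
  simpa [weight] using (Finset.card_filter_le Finset.univ fun i => c i = true)

lemma L_eq {n : ℕ} (P : Bool → ℝ) (c : Fin n → Bool) : L P c = Lw P n (weight c) := by
  classical
  have h := (Finset.sum_filter_add_sum_filter_not Finset.univ (fun i => c i = true)
      (fun i => Real.log (P (c i))))
  have h1 : ∑ i ∈ Finset.univ.filter (fun i => c i = true), Real.log (P (c i))
      = (weight c : ℝ) * Real.log (P true) := by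
    rw [Finset.sum_congr rfl (fun i hi => by
      simp only [Finset.mem_filter] at hi
      rw [hi.2]), Finset.sum_const, nsmul_eq_mul]
    rfl
  have hcard : (Finset.univ.filter (fun i => ¬ c i = true)).card = n - weight c := by
    have := Finset.card_filter_add_card_filter_not (s := (Finset.univ : Finset (Fin n)))
      (p := fun i => c i = true)
    simp only [Finset.card_univ, Fintype.card_fin] at this
    have hw := weight_le_n c
    unfold weight at *
    omega
  have h2 : ∑ i ∈ Finset.univ.filter (fun i => ¬ c i = true), Real.log (P (c i))
      = ((n : ℝ) - weight c) * Real.log (P false) := by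
    rw [Finset.sum_congr rfl (fun i hi => by
      simp only [Finset.mem_filter, Bool.not_eq_true] at hi
      rw [hi.2]), Finset.sum_const, nsmul_eq_mul, hcard]
    have := weight_le_n c
    push_cast [Nat.cast_sub this]
    ring
  have : L P c = (weight c : ℝ) * Real.log (P true) + ((n : ℝ) - weight c) * Real.log (P false) := by
    rw [L, ← h, h1, h2]
  rw [this, Lw]; ring

lemma Lw_anti {n : ℕ} (P : Bool → ℝ) (hlog : Real.log (P true) < Real.log (P false))
    {w w' : ℕ} (h : w ≤ w') : Lw P n w' ≤ Lw P n w := by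
  have hc : (w : ℝ) ≤ (w' : ℝ) := by exact_mod_cast h
  unfold Lw; nlinarith

lemma prod_pos {n : ℕ} (P : Bool → ℝ) (h1 : 0 < P true) (h0 : 0 < P false)
    (c : Fin n → Bool) : 0 < ∏ i, P (c i) :=
  Finset.prod_pos fun i _ => by cases hc : c i <;> simp [hc, h1, h0]

lemma divUnif_eq {n : ℕ} (P : Bool → ℝ) (h1 : 0 < P true) (h0 : 0 < P false)
    (C : Finset (Fin n → Bool)) (hC : C.Nonempty) :
    divUnif P C = -Real.log C.card - (∑ c ∈ C, L P c) / C.card := by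
  have hk : (0:ℝ) < C.card := by exact_mod_cast Finset.card_pos.mpr hC
  unfold divUnif
  have key : ∀ c ∈ C, (1 / (C.card : ℝ)) * Real.log ((1 / (C.card : ℝ)) / ∏ i, P (c i))
      = (1 / (C.card : ℝ)) * (-Real.log C.card - L P c) := by
    intro c _
    rw [Real.log_div (by positivity) (ne_of_gt (prod_pos P h1 h0 c)),
      Real.log_prod (fun i _ => by cases hc : c i <;> simp [hc, ne_of_gt h1, ne_of_gt h0]),
      one_div, Real.log_inv]
    rfl
  rw [Finset.sum_congr rfl key, ← Finset.mul_sum, Finset.sum_sub_distrib, Finset.sum_const,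
    nsmul_eq_mul]
  field_simp

lemma divUnif_le_divUnif {n : ℕ} (P : Bool → ℝ) (h1 : 0 < P true) (h0 : 0 < P false)
    (C D : Finset (Fin n → Bool)) (hC : C.Nonempty) (hD : D.Nonempty)
    (hcard : D.card = C.card) (hsum : ∑ c ∈ C, L P c ≤ ∑ c ∈ D, L P c) :
    divUnif P D ≤ divUnif P C := by
  rw [divUnif_eq P h1 h0 C hC, divUnif_eq P h1 h0 D hD, hcard]
  have hk : (0:ℝ) < C.card := by exact_mod_cast Finset.card_pos.mpr hC
  have h2 : (∑ c ∈ C, L P c) / C.card ≤ (∑ c ∈ D, L P c) / C.card :=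
    (div_le_div_iff_of_pos_right hk).mpr hsum
  linarith

def ball (n m : ℕ) : Finset (Fin n → Bool) :=
  Finset.univ.filter (fun c : Fin n → Bool => weight c ≤ m)

def layer (n m : ℕ) : Finset (Fin n → Bool) :=
  Finset.univ.filter (fun c : Fin n → Bool => weight c = m)

lemma ball_nonempty (n m : ℕ) : (ball n m).Nonempty := by
  refine ⟨fun _ => false, ?_⟩
  rw [ball, Finset.mem_filter]
  simp [weight]

lemma ball_succ (n m : ℕ) : ball n (m + 1) = ball n m ∪ layer n (m + 1) := by
  ext c
  simp only [ball, layer, Finset.mem_union, Finset.mem_filter, Finset.mem_univ, true_and]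
  omega

lemma ball_top (n : ℕ) : ball n n = Finset.univ := by
  ext c
  simp [ball, weight_le_n c]

lemma disjoint_ball_layer {n m : ℕ} {T : Finset (Fin n → Bool)} (hT : T ⊆ layer n (m + 1)) :
    Disjoint (ball n m) T := by
  rw [Finset.disjoint_left]
  intro c hc hcT
  have h1 : weight c ≤ m := (Finset.mem_filter.mp hc).2
  have h2 : weight c = m + 1 := (Finset.mem_filter.mp (hT hcT)).2
  omega

/-- Exchange argument: a "greedy" set `G` (containing all codewords of weight `< W` and
only codewords of weight `≤ W`) of the same size as `C` has at least as large an `L`-sum. -/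
lemma exchange {n : ℕ} (P : Bool → ℝ) (hlog : Real.log (P true) < Real.log (P false))
    (C G : Finset (Fin n → Bool)) (hcard : G.card = C.card) (W : ℕ)
    (hG1 : ∀ c ∈ G, weight c ≤ W) (hG2 : ∀ c, weight c < W → c ∈ G) :
    ∑ c ∈ C, L P c ≤ ∑ c ∈ G, L P c := by
  have hsplitC := Finset.sum_inter_add_sum_sdiff C G (L P)
  have hsplitG := Finset.sum_inter_add_sum_sdiff G C (L P)
  have hcards : (C \ G).card = (G \ C).card := by
    have hc1 := Finset.card_sdiff_add_card_inter C G
    have hc2 := Finset.card_sdiff_add_card_inter G C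
    rw [Finset.inter_comm] at hc2
    omega
  have hup : ∑ c ∈ C \ G, L P c ≤ (C \ G).card • Lw P n W := by
    refine Finset.sum_le_card_nsmul _ _ _ (fun c hc => ?_)
    have hnotG : c ∉ G := (Finset.mem_sdiff.mp hc).2
    have hw : W ≤ weight c := by
      by_contra hlt
      exact hnotG (hG2 c (by omega))
    rw [L_eq]
    exact Lw_anti P hlog hw
  have hdown : (G \ C).card • Lw P n W ≤ ∑ c ∈ G \ C, L P c := by
    refine Finset.card_nsmul_le_sum _ _ _ (fun c hc => ?_)
    rw [L_eq]
    exact Lw_anti P hlog (hG1 c (Finset.mem_sdiff.mp hc).1)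
  rw [Finset.inter_comm] at hsplitG
  rw [hcards] at hup
  linarith

/-- divergence of `ball n m ∪ T` as a function of `|T|`. -/
noncomputable def phi (a S Lm x : ℝ) : ℝ := -Real.log (a + x) - (S + x * Lm) / (a + x)

lemma divUnif_union {n : ℕ} (P : Bool → ℝ) (h1 : 0 < P true) (h0 : 0 < P false)
    (m : ℕ) (T : Finset (Fin n → Bool)) (hT : T ⊆ layer n (m + 1)) :
    divUnif P (ball n m ∪ T)
      = phi ((ball n m).card) (∑ c ∈ ball n m, L P c) (Lw P n (m + 1)) (T.card) := by
  have hdisj := disjoint_ball_layer hT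
  have hne : (ball n m ∪ T).Nonempty := (ball_nonempty n m).mono Finset.subset_union_left
  rw [divUnif_eq P h1 h0 _ hne, Finset.sum_union hdisj, Finset.card_union_of_disjoint hdisj]
  have hTsum : ∑ c ∈ T, L P c = (T.card : ℝ) * Lw P n (m + 1) := by
    rw [Finset.sum_congr rfl (fun c hc => by
      rw [L_eq, (Finset.mem_filter.mp (hT hc)).2]), Finset.sum_const, nsmul_eq_mul]
  rw [hTsum, phi]
  push_cast
  ring_nf

lemma phi_diff (a S Lm x : ℝ) (h0 : 0 < a + x) :
    phi a S Lm (x + 1) - phi a S Lm x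
      = (S - a * Lm) / ((a + x) * (a + x + 1)) - Real.log ((a + x + 1) / (a + x)) := by
  have h1 : (0:ℝ) < a + x + 1 := by linarith
  have e1 : a + (x + 1) = a + x + 1 := by ring
  unfold phi
  rw [e1, Real.log_div h1.ne' h0.ne']
  have alg : (S + x * Lm) / (a + x) - (S + (x + 1) * Lm) / (a + x + 1)
      = (S - a * Lm) / ((a + x) * (a + x + 1)) := by
    field_simp
    ring
  linarith [alg]

lemma phi_step (a S Lm : ℝ) (ha : 1 ≤ a) (x : ℝ) (hx : 0 ≤ x)
    (h : phi a S Lm (x + 1) < phi a S Lm x) :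
    phi a S Lm (x + 2) < phi a S Lm (x + 1) := by
  have h0 : (0:ℝ) < a + x := by linarith
  have h0' : (0:ℝ) < a + (x + 1) := by linarith
  have d1 := phi_diff a S Lm x h0
  have d2 := phi_diff a S Lm (x + 1) h0'
  set β := S - a * Lm with hβ
  set k := a + x with hk
  have e : a + (x + 1) = k + 1 := by rw [hk]; ring
  rw [e] at d2
  have e2 : k + 1 + 1 = k + 2 := by ring
  rw [e2] at d2
  have e3 : x + 1 + 1 = x + 2 := by ring
  rw [e3] at d2
  have hk1 : (1:ℝ) ≤ k := by rw [hk]; linarith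
  have hkpos : (0:ℝ) < k := by linarith
  have hp1 : (0:ℝ) < k * (k + 1) := by nlinarith
  have hp2 : (0:ℝ) < (k + 1) * (k + 2) := by nlinarith
  -- from h : β/(k(k+1)) < log((k+1)/k)
  have hA : β < k * (k + 1) * Real.log ((k + 1) / k) := by
    have hdiv : β / (k * (k + 1)) < Real.log ((k + 1) / k) := by linarith [d1, h]
    have := (div_lt_iff₀ hp1).mp hdiv
    linarith
  -- monotonicity of k(k+1)log((k+1)/k)
  have l1 : k * Real.log ((k + 1) / k) ≤ 1 := by
    have hpos : (0:ℝ) < (k + 1) / k := by positivity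
    have hle := Real.log_le_sub_one_of_pos hpos
    have he : (k + 1) / k - 1 = 1 / k := by field_simp; ring
    rw [he] at hle
    have := mul_le_mul_of_nonneg_left hle (le_of_lt hkpos)
    have hek : k * (1 / k) = 1 := by field_simp
    linarith [hek ▸ this]
  have l2 : 1 ≤ (k + 2) * Real.log ((k + 2) / (k + 1)) := by
    have hpos : (0:ℝ) < (k + 1) / (k + 2) := by positivity
    have hle := Real.log_le_sub_one_of_pos hpos
    have hinv : Real.log ((k + 1) / (k + 2)) = -Real.log ((k + 2) / (k + 1)) := by
      rw [← Real.log_inv, inv_div]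
    rw [hinv] at hle
    have he : (k + 1) / (k + 2) - 1 = -(1 / (k + 2)) := by
      field_simp
      norm_num
    rw [he] at hle
    have hlog2 : 1 / (k + 2) ≤ Real.log ((k + 2) / (k + 1)) := by linarith
    have hk2 : (0:ℝ) < k + 2 := by linarith
    have := mul_le_mul_of_nonneg_left hlog2 (le_of_lt hk2)
    have hek : (k + 2) * (1 / (k + 2)) = 1 := by field_simp
    linarith [hek ▸ this]
  have hm : k * (k + 1) * Real.log ((k + 1) / k) ≤ (k + 1) * (k + 2) * Real.log ((k + 2) / (k + 1)) := by
    nlinarith [l1, l2]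
  have hB : β < (k + 1) * (k + 2) * Real.log ((k + 2) / (k + 1)) := lt_of_lt_of_le hA hm
  have hC : β / ((k + 1) * (k + 2)) < Real.log ((k + 2) / (k + 1)) := by
    rw [div_lt_iff₀ hp2]
    linarith
  linarith [d2, hC]

/-- Once a sequence strictly decreases it keeps decreasing; hence its min over an
initial segment is attained at an endpoint. -/
lemma seq_min (φ : ℕ → ℝ) (H : ∀ t, φ (t + 1) < φ t → φ (t + 2) < φ (t + 1))
    (T t : ℕ) (ht : t ≤ T) : min (φ 0) (φ T) ≤ φ t := by
  by_cases hc : ∀ s, s < t → φ s ≤ φ (s + 1)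
  · refine le_trans (min_le_left _ _) ?_
    clear ht
    induction t with
    | zero => exact le_refl _
    | succ u ih =>
      have h1 : φ 0 ≤ φ u := ih (fun s hs => hc s (by omega))
      exact le_trans h1 (hc u (by omega))
  · push_neg at hc
    obtain ⟨s, hst, hdec⟩ := hc
    refine le_trans (min_le_right _ _) ?_
    have dec' : ∀ u, s ≤ u → φ (u + 1) < φ u := by
      intro u hu
      induction u, hu using Nat.le_induction with
      | base => exact hdec
      | succ v hv ih => exact H v ih
    have chain : ∀ u v, s ≤ u → u ≤ v → φ v ≤ φ u := by
      intro u v hu huv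
      induction v, huv using Nat.le_induction with
      | base => exact le_refl _
      | succ w hw ih => exact le_trans (le_of_lt (dec' w (le_trans hu hw))) ih
    exact chain t T (by omega) ht

lemma ball_zero (n : ℕ) : ball n 0 = {fun _ => false} := by
  ext c
  simp only [ball, Finset.mem_filter, Finset.mem_univ, true_and, Nat.le_zero,
    Finset.mem_singleton, weight, Finset.card_eq_zero, Finset.filter_eq_empty_iff]
  constructor
  · intro h
    funext i
    have hi := @h i trivial
    simpa using hi
  · intro h i _
    simp [h]

end OptAux

open OptAux in
theorem opt_codebook_is_weight_bounded' (n : ℕ) (hn : 1 ≤ n)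
    (P : Bool → ℝ) (h1 : 0 < P true) (h01 : P true < P false) :
    ∃ m ≤ n, ∀ C : Finset (Fin n → Bool), C.Nonempty →
      divUnif P (Finset.univ.filter (fun c : Fin n → Bool => weight c ≤ m))
        ≤ divUnif P C := by
  classical
  have h0 : 0 < P false := lt_trans h1 h01
  have hlog : Real.log (P true) < Real.log (P false) := Real.log_lt_log h1 h01
  obtain ⟨m0, hm0mem, hmin⟩ := Finset.exists_min_image (Finset.range (n + 1))
    (fun m => divUnif P (ball n m)) ⟨0, Finset.mem_range.mpr (by omega)⟩
  have hm0le : m0 ≤ n := Nat.lt_succ_iff.mp (Finset.mem_range.mp hm0mem)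
  refine ⟨m0, hm0le, ?_⟩
  intro C hC
  show divUnif P (ball n m0) ≤ divUnif P C
  have hk1 : 1 ≤ C.card := Finset.card_pos.mpr hC
  have hpn : C.card ≤ (ball n n).card := by
    rw [ball_top]
    exact Finset.card_le_univ C
  have hex : ∃ m, C.card ≤ (ball n m).card := ⟨n, hpn⟩
  obtain ⟨M, hMle, hMk, hMmin⟩ : ∃ M, M ≤ n ∧ C.card ≤ (ball n M).card ∧
      ∀ m' < M, ¬ C.card ≤ (ball n m').card :=
    ⟨Nat.find hex, Nat.find_le hpn, Nat.find_spec hex, fun m' h => Nat.find_min hex h⟩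
  rcases Nat.eq_zero_or_pos M with hM0 | hMpos
  · -- M = 0 : C is a single codeword, the all-zero ball beats it
    subst hM0
    rw [ball_zero] at hMk
    simp only [Finset.card_singleton] at hMk
    have hkeq : C.card = 1 := le_antisymm hMk hk1
    have hGcard : (ball n 0).card = C.card := by rw [ball_zero, hkeq, Finset.card_singleton]
    have hsum := exchange P hlog C (ball n 0) hGcard 0
      (fun c hc => (Finset.mem_filter.mp hc).2) (fun c hc => absurd hc (by omega))
    have hle1 := divUnif_le_divUnif P h1 h0 C (ball n 0) hC (ball_nonempty n 0) hGcard hsum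
    exact le_trans (hmin 0 (Finset.mem_range.mpr (by omega))) hle1
  · obtain ⟨m', rfl⟩ : ∃ m', M = m' + 1 := ⟨M - 1, by omega⟩
    have hfail : ¬ C.card ≤ (ball n m').card := hMmin m' (by omega)
    set a := (ball n m').card with ha
    set r := C.card - a with hr
    have har : a + r = C.card := by omega
    have hcardsucc : (ball n (m' + 1)).card = a + (layer n (m' + 1)).card := by
      rw [ball_succ, Finset.card_union_of_disjoint (disjoint_ball_layer (Finset.Subset.refl _))]
    have hrle : r ≤ (layer n (m' + 1)).card := by omega
    obtain ⟨T, hT, hTcard⟩ := Finset.exists_subset_card_eq hrle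
    set G := ball n m' ∪ T with hG
    have hGcard : G.card = C.card := by
      rw [hG, Finset.card_union_of_disjoint (disjoint_ball_layer hT), hTcard, har]
    have hGne : G.Nonempty := (ball_nonempty n m').mono Finset.subset_union_left
    have hsum := exchange P hlog C G hGcard (m' + 1)
      (fun c hc => by
        rcases Finset.mem_union.mp hc with h | h
        · have := (Finset.mem_filter.mp h).2; omega
        · exact le_of_eq (Finset.mem_filter.mp (hT h)).2)
      (fun c hc => Finset.mem_union_left _ (Finset.mem_filter.mpr ⟨Finset.mem_univ _, by omega⟩))
    have hle1 := divUnif_le_divUnif P h1 h0 C G hC hGne hGcard hsum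
    -- phi values
    set S := ∑ c ∈ ball n m', L P c with hS
    set Lm := Lw P n (m' + 1) with hLm
    have hphiG : divUnif P G = phi a S Lm (T.card) := divUnif_union P h1 h0 m' T hT
    have hphi0 : divUnif P (ball n m') = phi a S Lm 0 := by
      have := divUnif_union (n := n) P h1 h0 m' ∅ (Finset.empty_subset _)
      rw [Finset.union_empty] at this
      simpa using this
    have hphiL : divUnif P (ball n (m' + 1)) = phi a S Lm ((layer n (m' + 1)).card) := by
      rw [ball_succ]
      exact divUnif_union P h1 h0 m' (layer n (m' + 1)) (Finset.Subset.refl _)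
    have ha1 : (1:ℝ) ≤ (a : ℝ) := by
      exact_mod_cast Finset.card_pos.mpr (ball_nonempty n m')
    have hH : ∀ t : ℕ, phi a S Lm (t + 1 : ℕ) < phi a S Lm (t : ℕ) →
        phi a S Lm (t + 2 : ℕ) < phi a S Lm (t + 1 : ℕ) := by
      intro t h
      have hstep := phi_step (a : ℝ) S Lm ha1 (t : ℝ) (Nat.cast_nonneg t) (by push_cast at h ⊢; exact h)
      push_cast
      exact hstep
    have hend := seq_min (fun t : ℕ => phi a S Lm (t : ℕ)) hH ((layer n (m' + 1)).card) T.card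
      (by omega)
    simp only [Nat.cast_zero] at hend
    have hm0both : divUnif P (ball n m0) ≤ min (phi a S Lm 0) (phi a S Lm ((layer n (m' + 1)).card)) := by
      refine le_min ?_ ?_
      · rw [← hphi0]; exact hmin m' (Finset.mem_range.mpr (by omega))
      · rw [← hphiL]; exact hmin (m' + 1) (Finset.mem_range.mpr (by omega))
    calc divUnif P (ball n m0) ≤ _ := hm0both
      _ ≤ phi a S Lm (T.card) := hend
      _ = divUnif P G := hphiG.symm
      _ ≤ divUnif P C := hle1


/-- For a binary target distribution with `P_A(0) > P_A(1) > 0`, some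
`[0,m]`-out-of-`n` codebook (all sequences of Hamming weight at most `m`) minimizes
`D(Uniform_C ‖ P_A^n)` over all nonempty codebooks `C ⊆ {0,1}^n`. -/
theorem opt_codebook_is_weight_bounded (n : ℕ) (hn : 1 ≤ n)
    (P : Bool → ℝ) (h1 : 0 < P true) (h01 : P true < P false)
    (hPsum : P false + P true = 1) :
    ∃ m ≤ n, ∀ C : Finset (Fin n → Bool), C.Nonempty →
      divUnif P (Finset.univ.filter (fun c : Fin n → Bool => weight c ≤ m))
        ≤ divUnif P C := by
  exact opt_codebook_is_weight_bounded' n hn P h1 h01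
end
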